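/- Let ε ∈ ℝ, N ≥ 2, and let E be the N×N matrix with E_{ii} = ε for all i, E_{i+1,i} = −ε for i = 0,…,N−2, E_{0,N−1} = −ε, and all other entries zero. Let M be the 2N×2N block matrix M = [[0, I],[E, 0]]. Then for every λ ∈ ℂ, det(λ·I_{2N} − M) = (λ² − ε)^N − (−ε)^N. -/

import Mathlib

/-!
The characteristic matrix of `[[0, 1], [A, 0]]` times `[[X, 0], [A, 1]]` is block triangular
with diagonal blocks `X² - A` and `X`, so `χ_M(X) · X^N = χ_A(X²) · X^N`, and `X^N` can be
cancelled in `R[X]`. Here `λ² - E` is cyclic bidiagonal, and in the Leibniz expansion of such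
a determinant only the identity and the cyclic rotation survive, giving `(λ² - ε)^N - (-ε)^N`.
-/

open Matrix Polynomial Equiv
open Fin.NatCast

theorem Equiv.Perm.eq_one_or_eq_finRotate_of_forall {n : ℕ} {σ : Perm (Fin (n + 2))}
    (hσ : ∀ i, σ i = i ∨ σ i = i + 1) : σ = 1 ∨ σ = finRotate (n + 2) := by
  by_cases hfix : ∀ i, σ i = i
  · exact .inl (Equiv.ext hfix)
  obtain ⟨j, hj⟩ := not_forall.mp hfix
  have hshift : ∀ k : ℕ, σ (j + (k : Fin (n + 2))) = j + k + 1 := by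
    intro k
    induction k with
    | zero => simpa using (hσ j).resolve_left hj
    | succ k ih =>
      rw [Nat.cast_succ, ← add_assoc]
      refine (hσ _).resolve_left fun hfixed => ?_
      have := σ.injective (ih.trans hfixed.symm)
      simp at this
  refine .inr (Equiv.ext fun i => ?_)
  simpa [finRotate_apply] using hshift (i - j).val

namespace Matrix

variable {R : Type*} [CommRing R]

def cyclicBidiagonal (n : ℕ) [NeZero n] (a b : R) : Matrix (Fin n) (Fin n) R :=
  of fun i j => if i = j then a else if i = j + 1 then b else 0

theorem det_cyclicBidiagonal (n : ℕ) (a b : R) :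
    (cyclicBidiagonal (n + 2) a b).det = a ^ (n + 2) - (-b) ^ (n + 2) := by
  have hsucc : ∀ i : Fin (n + 2), i + 1 ≠ i := by simp
  have hne : (1 : Perm (Fin (n + 2))) ≠ finRotate (n + 2) := fun h => by
    simpa [finRotate_apply] using hsucc 0 (DFunLike.congr_fun h 0).symm
  have hvanish : ∀ σ : Perm (Fin (n + 2)), σ ∉ ({1, finRotate (n + 2)} : Finset _) →
      ∏ i, cyclicBidiagonal (n + 2) a b (σ i) i = 0 := by
    intro σ hσ
    obtain ⟨i, hi⟩ : ∃ i, ¬(σ i = i ∨ σ i = i + 1) := by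
      by_contra! h
      simp only [Finset.mem_insert, Finset.mem_singleton, not_or] at hσ
      exact (Perm.eq_one_or_eq_finRotate_of_forall h).elim hσ.1 hσ.2
    exact Finset.prod_eq_zero (Finset.mem_univ i) (by simp [cyclicBidiagonal, not_or.mp hi])
  rw [det_apply', ← Finset.sum_subset (Finset.subset_univ _) fun σ _ hσ => by
    rw [hvanish σ hσ, mul_zero], Finset.sum_pair hne]
  simp only [cyclicBidiagonal, of_apply, Perm.coe_one, id_eq, finRotate_apply, hsucc, ↓reduceIte,
    Perm.sign_one, sign_finRotate, Units.val_one, Units.val_pow_eq_pow_val, Units.val_neg,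
    Int.cast_one, Int.cast_pow, Int.cast_neg, Finset.prod_const, Finset.card_univ,
    Fintype.card_fin, Nat.add_one_sub_one, one_mul]
  ring

theorem charmatrix_cyclicBidiagonal (n : ℕ) [NeZero n] (a b : R) :
    (cyclicBidiagonal n a b).charmatrix = cyclicBidiagonal n (X - C a) (-C b) := by
  ext i j : 1
  by_cases h : i = j
  · simp [h, cyclicBidiagonal]
  · simp [h, cyclicBidiagonal, apply_ite C, neg_ite]

theorem charpoly_cyclicBidiagonal (n : ℕ) (a b : R) :
    (cyclicBidiagonal (n + 2) a b).charpoly = (X - C a) ^ (n + 2) - C b ^ (n + 2) := by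
  rw [charpoly, charmatrix_cyclicBidiagonal, det_cyclicBidiagonal, neg_neg]

section Blocks

variable {n : Type*} [Fintype n] [DecidableEq n]

theorem charpoly_fromBlocks_zero_one_zero (A : Matrix n n R) :
    (fromBlocks 0 1 A 0).charpoly = A.charpoly.comp (X ^ 2) := by
  set K : Matrix (n ⊕ n) (n ⊕ n) R[X] := fromBlocks (scalar n X) 0 (A.map C) 1
  have hK : K.det = X ^ Fintype.card n := by simp [K]
  have hprod : (fromBlocks 0 1 A 0).charmatrix * K =
      fromBlocks (scalar n (X ^ 2) - A.map C) (-1) 0 (scalar n X) := by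
    simp [K, charmatrix_fromBlocks, fromBlocks_multiply, sq, sub_eq_add_neg, -scalar_apply,
      scalar_comm, Commute.all]
  have hcomp : A.charpoly.comp (X ^ 2) = (scalar n (X ^ 2) - A.map C).det := by
    rw [charpoly, ← coe_compRingHom_apply, RingHom.map_det]
    congr 1
    ext i j
    by_cases h : i = j <;> simp [h]
  refine (isRegular_X_pow (R := R) (Fintype.card n)).right.eq_iff.mp ?_
  have := congrArg det hprod
  rw [det_mul, hK, det_fromBlocks_zero₂₁, ← hcomp] at this
  simpa [charpoly] using this

end Blocks

end Matrix

theorem Fin.eq_add_one_iff_val {n : ℕ} (i j : Fin (n + 1)) :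
    i = j + 1 ↔ (i : ℕ) = j + 1 ∨ (i : ℕ) = 0 ∧ (j : ℕ) = n := by
  have hi := i.isLt
  rw [Fin.ext_iff, Fin.val_add_one]
  split_ifs with h
  · subst h
    simp only [Fin.val_last, and_true]
    omega
  · have : (j : ℕ) ≠ n := fun hj => h (Fin.ext hj)
    omega

theorem block_matrix_charpoly
    (ε : ℝ) (N : ℕ) (hN : 2 ≤ N)
    (E : Matrix (Fin N) (Fin N) ℝ)
    (hE : ∀ i j : Fin N, E i j =
      if (i : ℕ) = (j : ℕ) then ε
      else if (i : ℕ) = (j : ℕ) + 1 then -ε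
      else if (i : ℕ) = 0 ∧ (j : ℕ) = N - 1 then -ε
      else 0)
    (M : Matrix (Fin N ⊕ Fin N) (Fin N ⊕ Fin N) ℝ)
    (hM : M = Matrix.fromBlocks 0 1 E 0) :
    ∀ lam : ℂ,
      Matrix.det (lam • (1 : Matrix (Fin N ⊕ Fin N) (Fin N ⊕ Fin N) ℂ)
          - M.map (fun r : ℝ => (r : ℂ)))
        = (lam ^ 2 - (ε : ℂ)) ^ N - (-(ε : ℂ)) ^ N := by
  intro lam
  obtain ⟨n, rfl⟩ : ∃ n, N = n + 2 := ⟨N - 2, by omega⟩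
  have hEC : E.map (fun r : ℝ => (r : ℂ)) = cyclicBidiagonal (n + 2) (ε : ℂ) (-ε) := by
    ext i j
    simp only [map_apply, hE, cyclicBidiagonal, of_apply, Fin.eq_add_one_iff_val]
    simp only [← Fin.val_inj]
    split_ifs <;> first | push_cast; rfl | omega
  have hMC : M.map (fun r : ℝ => (r : ℂ)) =
      fromBlocks 0 1 (cyclicBidiagonal (n + 2) (ε : ℂ) (-ε)) 0 := by
    rw [hM, fromBlocks_map, ← hEC]
    simp
  rw [smul_one_eq_diagonal, ← scalar_apply, ← eval_charpoly, hMC,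
    charpoly_fromBlocks_zero_one_zero, charpoly_cyclicBidiagonal]
  simp
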